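/- For q > 0, α ∈ [0,1], and n ≥ 2, the numbers λ_{k,q}^{(α,n)} = (q^{k(k-1)/2} [n-2]_q! / ([n-k]_q! [n]_q^k)) · ((1-α)[n-k]_q[n-1+k]_q + α[n]_q[n-1]_q), for k = 2, ..., n, are pairwise distinct; in fact λ_{k,q}^{(α,n)} < λ_{k-j,q}^{(α,n)} for all 1 ≤ j ≤ k-1. -/

import Mathlib

open Finset Filter Topology

/-- The q-integer `[m]_q = 1 + q + ... + q^{m-1}`, with `[0]_q = 0`. -/
noncomputable def qInt (q : ℝ) (m : ℕ) : ℝ := ∑ i ∈ Finset.range m, q ^ i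

/-- The q-factorial `[n]_q! = [1]_q [2]_q ⋯ [n]_q`. -/
noncomputable def qFact (q : ℝ) (n : ℕ) : ℝ := ∏ i ∈ Finset.range n, qInt q (i + 1)

/-- The q-binomial coefficient `[n]_q!/([k]_q! [n-k]_q!)` (zero if `k > n`). -/
noncomputable def qBinom (q : ℝ) (n k : ℕ) : ℝ :=
  if k ≤ n then qFact q n / (qFact q k * qFact q (n - k)) else 0

/-- The q-Stirling number of the second kind. -/
noncomputable def qStirling (q : ℝ) (k r : ℕ) : ℝ :=
  (1 / (qFact q r * q ^ (r * (r - 1) / 2))) *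
    ∑ i ∈ Finset.range (r + 1),
      (-1 : ℝ) ^ i * q ^ (i * (i - 1) / 2) * qBinom q r i * (qInt q (r - i)) ^ k

/-- The q-forward difference operator on sequences:
`Δ_q^0 f_i = f_i`, `Δ_q^{r+1} f_i = Δ_q^r f_{i+1} - q^r Δ_q^r f_i`. -/
noncomputable def qDiff (q : ℝ) : ℕ → (ℕ → ℝ) → ℕ → ℝ
  | 0, f, i => f i
  | r + 1, f, i => qDiff q r f (i + 1) - q ^ r * qDiff q r f i

/-- The eigenvalues `λ_{k,q}^{(α,n)}` of the (α,q)-Bernstein operator. -/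
noncomputable def lamEig (q α : ℝ) (n k : ℕ) : ℝ :=
  q ^ (k * (k - 1) / 2) * qFact q (n - 2) / (qFact q (n - k) * (qInt q n) ^ k) *
    ((1 - α) * qInt q (n - k) * qInt q (n - 1 + k) + α * qInt q n * qInt q (n - 1))

/-- The coefficients `a_{n,q}(r,k)` of `T_{n,q,α}(t^k; x) = Σ_r a_{n,q}(r,k) x^r`. -/
noncomputable def aCoef (q α : ℝ) (n r k : ℕ) : ℝ :=
  q ^ (r * (r - 1) / 2) * qFact q (n - 2) / ((qInt q n) ^ k * qFact q (n - r)) *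
    ((1 - α) * qInt q (n - r) *
        (qInt q (n + r - 1) * qStirling q (k + 1) (r + 1) -
          qInt q (r + 1) * qInt q (n - 1) * qStirling q k (r + 1)) +
      α * qInt q n * qInt q (n - 1) * qStirling q k r)

/-- The (α,q)-Bernstein operator, via its forward-difference representation
`T_{n,q,α}(f;x) = Σ_{r=0}^n ((1-α) C_q(n-1,r) Δ_q^r g_0 + α C_q(n,r) Δ_q^r f_0) x^r`,
where `f_i = f([i]_q/[n]_q)` and
`g_i = (1 - q^{n-i-1}[i]_q/[n-1]_q) f_i + (q^{n-i-1}[i]_q/[n-1]_q) f_{i+1}`. -/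
noncomputable def Talpha (q α : ℝ) (n : ℕ) (f : ℝ → ℝ) (x : ℝ) : ℝ :=
  let fs : ℕ → ℝ := fun i => f (qInt q i / qInt q n)
  let gs : ℕ → ℝ := fun i =>
    (1 - q ^ (n - i - 1) * qInt q i / qInt q (n - 1)) * fs i +
      (q ^ (n - i - 1) * qInt q i / qInt q (n - 1)) * fs (i + 1)
  ∑ r ∈ Finset.range (n + 1),
    ((1 - α) * qBinom q (n - 1) r * qDiff q r gs 0 + α * qBinom q n r * qDiff q r fs 0) * x ^ r


/-!
Write `λ_k = c_k · B_k` with `c_k = q^{k(k-1)/2} [n-2]_q! / ([n-k]_q! [n]_q^k)` and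
`B_k = (1-α)[n-k]_q[n-1+k]_q + α[n]_q[n-1]_q`. Then `c_{k+1} = c_k · q^k [n-k]_q / [n]_q`, and
`q^k [n-k]_q < [k]_q + q^k [n-k]_q = [n]_q`, so `c_k` strictly decreases. The factor `B_k` is
positive and weakly decreases, because `[a]_q [b+1]_q ≤ [a+1]_q [b]_q` for `a ≤ b`: this is
`q^b [a]_q ≤ q^a [b]_q`, i.e. `[m]_q / q^m = q^{-1} + ⋯ + q^{-m}` is increasing in `m`.
-/

lemma qInt_nonneg {q : ℝ} (hq : 0 < q) (m : ℕ) : 0 ≤ qInt q m :=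
  Finset.sum_nonneg fun i _ => (pow_pos hq i).le

lemma qInt_pos {q : ℝ} (hq : 0 < q) {m : ℕ} (hm : 0 < m) : 0 < qInt q m :=
  Finset.sum_pos (fun i _ => pow_pos hq i) (Finset.nonempty_range_iff.mpr hm.ne')

lemma qFact_pos {q : ℝ} (hq : 0 < q) (n : ℕ) : 0 < qFact q n :=
  Finset.prod_pos fun i _ => qInt_pos hq i.succ_pos

lemma qInt_add (q : ℝ) (a b : ℕ) : qInt q (a + b) = qInt q a + q ^ a * qInt q b := by
  simp only [qInt, Finset.sum_range_add, Finset.mul_sum, pow_add]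

lemma qInt_succ (q : ℝ) (m : ℕ) : qInt q (m + 1) = qInt q m + q ^ m :=
  Finset.sum_range_succ _ _

lemma qFact_succ (q : ℝ) (m : ℕ) : qFact q (m + 1) = qFact q m * qInt q (m + 1) :=
  Finset.prod_range_succ _ _

lemma pow_mul_qInt_lt {q : ℝ} (hq : 0 < q) {k : ℕ} (hk : 0 < k) (m : ℕ) :
    q ^ k * qInt q m < qInt q (k + m) := by
  rw [qInt_add]
  linarith [qInt_pos hq hk]

lemma pow_mul_qInt_le {q : ℝ} (hq : 0 < q) {a b : ℕ} (hab : a ≤ b) :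
    q ^ b * qInt q a ≤ q ^ a * qInt q b := by
  obtain ⟨c, rfl⟩ := Nat.exists_eq_add_of_le hab
  have hswap : qInt q c + q ^ c * qInt q a = qInt q a + q ^ a * qInt q c := by
    rw [← qInt_add, ← qInt_add, add_comm]
  calc q ^ (a + c) * qInt q a = q ^ a * (qInt q a + q ^ a * qInt q c - qInt q c) := by
        rw [pow_add, ← hswap]; ring
    _ ≤ q ^ a * (qInt q a + q ^ a * qInt q c) := by
        gcongr
        exact sub_le_self _ (qInt_nonneg hq c)
    _ = q ^ a * qInt q (a + c) := by rw [qInt_add]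

lemma qInt_mul_qInt_succ_le {q : ℝ} (hq : 0 < q) {a b : ℕ} (hab : a ≤ b) :
    qInt q a * qInt q (b + 1) ≤ qInt q (a + 1) * qInt q b := by
  rw [qInt_succ, qInt_succ]
  linarith [pow_mul_qInt_le hq hab]

section Eigenvalues

variable {q α : ℝ} {n k : ℕ}

noncomputable def lamEigScale (q : ℝ) (n k : ℕ) : ℝ :=
  q ^ (k * (k - 1) / 2) * qFact q (n - 2) / (qFact q (n - k) * (qInt q n) ^ k)

noncomputable def lamEigFactor (q α : ℝ) (n k : ℕ) : ℝ :=
  (1 - α) * qInt q (n - k) * qInt q (n - 1 + k) + α * qInt q n * qInt q (n - 1)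

lemma lamEig_eq_scale_mul_factor :
    lamEig q α n k = lamEigScale q n k * lamEigFactor q α n k :=
  rfl

lemma lamEigScale_pos (hq : 0 < q) (hn : 0 < n) (k : ℕ) : 0 < lamEigScale q n k := by
  have := qFact_pos hq (n - 2)
  have := qFact_pos hq (n - k)
  have := qInt_pos hq hn
  unfold lamEigScale
  positivity

lemma lamEigScale_succ (hq : 0 < q) (hkn : k < n) :
    lamEigScale q n (k + 1) = lamEigScale q n k * (q ^ k * qInt q (n - k) / qInt q n) := by
  obtain ⟨m, hm⟩ : ∃ m, n - k = m + 1 := ⟨n - (k + 1), by omega⟩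
  have hFm := qFact_pos hq m
  have hm1 := qInt_pos hq m.succ_pos
  have hN := qInt_pos hq (k.zero_le.trans_lt hkn)
  rw [lamEigScale, lamEigScale, Nat.triangle_succ, show n - (k + 1) = m by omega, hm, qFact_succ]
  field_simp
  ring

lemma lamEigScale_succ_lt (hq : 0 < q) (hk : 0 < k) (hkn : k < n) :
    lamEigScale q n (k + 1) < lamEigScale q n k := by
  have hN := qInt_pos hq (hk.trans hkn)
  have hratio : q ^ k * qInt q (n - k) / qInt q n < 1 := by
    rw [div_lt_one hN]
    simpa only [Nat.add_sub_cancel' hkn.le] using pow_mul_qInt_lt hq hk (n - k)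
  rw [lamEigScale_succ hq hkn]
  exact mul_lt_of_lt_one_right (lamEigScale_pos hq (hk.trans hkn) k) hratio

lemma lamEigFactor_pos (hq : 0 < q) (hα : α ∈ Set.Icc (0 : ℝ) 1) (hk : 0 < k) (hkn : k < n) :
    0 < lamEigFactor q α n k := by
  have hkept : 0 < qInt q (n - k) * qInt q (n - 1 + k) :=
    mul_pos (qInt_pos hq (by omega)) (qInt_pos hq (by omega))
  have hfull : 0 < qInt q n * qInt q (n - 1) :=
    mul_pos (qInt_pos hq (by omega)) (qInt_pos hq (by omega))
  unfold lamEigFactor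
  rcases hα.2.lt_or_eq with hlt | rfl
  · have := mul_pos (sub_pos.2 hlt) hkept
    have := mul_nonneg hα.1 hfull.le
    linarith
  · linarith

lemma lamEigFactor_succ_le (hq : 0 < q) (hα : α ≤ 1) (hkn : k < n) :
    lamEigFactor q α n (k + 1) ≤ lamEigFactor q α n k := by
  have key := qInt_mul_qInt_succ_le hq (show n - (k + 1) ≤ n - 1 + k by omega)
  rw [show n - (k + 1) + 1 = n - k by omega] at key
  unfold lamEigFactor
  rw [← add_assoc]
  linarith [mul_le_mul_of_nonneg_left key (sub_nonneg.2 hα)]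

lemma lamEig_succ_lt (hq : 0 < q) (hα : α ∈ Set.Icc (0 : ℝ) 1) (hk : 0 < k) (hkn : k < n) :
    lamEig q α n (k + 1) < lamEig q α n k := by
  simp only [lamEig_eq_scale_mul_factor]
  calc lamEigScale q n (k + 1) * lamEigFactor q α n (k + 1)
      ≤ lamEigScale q n (k + 1) * lamEigFactor q α n k :=
        mul_le_mul_of_nonneg_left (lamEigFactor_succ_le hq hα.2 hkn)
          (lamEigScale_pos hq (hk.trans hkn) _).le
    _ < lamEigScale q n k * lamEigFactor q α n k :=
        mul_lt_mul_of_pos_right (lamEigScale_succ_lt hq hk hkn) (lamEigFactor_pos hq hα hk hkn)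

lemma lamEig_strictAntiOn (hq : 0 < q) (hα : α ∈ Set.Icc (0 : ℝ) 1) :
    StrictAntiOn (lamEig q α n) (Set.Icc 1 n) :=
  strictAntiOn_of_add_one_lt Set.ordConnected_Icc fun _ _ hk hk1 =>
    lamEig_succ_lt hq hα hk.1 hk1.2

end Eigenvalues

theorem lamEig_distinct_general (q α : ℝ) (hq : 0 < q) (hα : α ∈ Set.Icc (0 : ℝ) 1)
    (n : ℕ) :
    (∀ k j : ℕ, 2 ≤ k → k ≤ n → 1 ≤ j → j ≤ k - 1 →
        lamEig q α n k < lamEig q α n (k - j)) ∧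
      ∀ k₁ k₂ : ℕ, 2 ≤ k₁ → k₁ ≤ n → 2 ≤ k₂ → k₂ ≤ n → k₁ ≠ k₂ →
        lamEig q α n k₁ ≠ lamEig q α n k₂ := by
  have hanti := lamEig_strictAntiOn (n := n) hq hα
  refine ⟨fun k j hk hkn hj hjk => ?_, fun k₁ k₂ hk₁ hk₁n hk₂ hk₂n hne => ?_⟩
  · exact hanti ⟨by omega, by omega⟩ ⟨by omega, hkn⟩ (by omega)
  · exact (hanti.injOn.ne_iff ⟨by omega, hk₁n⟩ ⟨by omega, hk₂n⟩).2 hne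

theorem lamEig_distinct (q α : ℝ) (hq : 0 < q) (hα : α ∈ Set.Icc (0 : ℝ) 1)
    (n : ℕ) (hn : 2 ≤ n) :
    (∀ k j : ℕ, 2 ≤ k → k ≤ n → 1 ≤ j → j ≤ k - 1 →
        lamEig q α n k < lamEig q α n (k - j)) ∧
      ∀ k₁ k₂ : ℕ, 2 ≤ k₁ → k₁ ≤ n → 2 ≤ k₂ → k₂ ≤ n → k₁ ≠ k₂ →
        lamEig q α n k₁ ≠ lamEig q α n k₂ :=
  lamEig_distinct_general q α hq hα n
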